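/- Every stable binary phylogenetic network is tree-based. -/

import Mathlib

/-- Out-degree of `v` in the digraph with arc relation `arc`. -/
def outdeg {V : Type} [Fintype V] [DecidableEq V] (arc : V → V → Bool) (v : V) : ℕ :=
  (Finset.univ.filter fun w => arc v w = true).card

/-- In-degree of `v` in the digraph with arc relation `arc`. -/
def indeg {V : Type} [Fintype V] [DecidableEq V] (arc : V → V → Bool) (v : V) : ℕ :=
  (Finset.univ.filter fun u => arc u v = true).card

/-- A rooted binary phylogenetic network on the finite vertex type `V`:
a directed acyclic graph with a single root of indegree 0 and outdegree 1 or 2,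
all other vertices being leaves (indegree 1, outdegree 0),
reticulations (indegree 2, outdegree 1) or tree-vertices (indegree 1, outdegree 2). -/
structure BinNet (V : Type) [Fintype V] [DecidableEq V] where
  arc : V → V → Bool
  root : V
  acyclic : ∀ v, ¬ Relation.TransGen (fun a b => arc a b = true) v v
  root_indeg : indeg arc root = 0
  root_outdeg : outdeg arc root = 1 ∨ outdeg arc root = 2
  vertex_types : ∀ v, v ≠ root →
    (indeg arc v = 1 ∧ outdeg arc v = 0) ∨
    (indeg arc v = 2 ∧ outdeg arc v = 1) ∨
    (indeg arc v = 1 ∧ outdeg arc v = 2)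

variable {V : Type} [Fintype V] [DecidableEq V]

/-- A leaf of the network. -/
def BinNet.IsLeaf (N : BinNet V) (v : V) : Prop := outdeg N.arc v = 0

/-- A reticulation of the network. -/
def BinNet.IsRetic (N : BinNet V) (v : V) : Prop := indeg N.arc v = 2

/-- A tree-vertex of the network. -/
def BinNet.IsTreeVertex (N : BinNet V) (v : V) : Prop :=
  v ≠ N.root ∧ indeg N.arc v = 1 ∧ outdeg N.arc v = 2

/-- An omnian: a non-leaf vertex all of whose children are reticulations. -/
def BinNet.IsOmnian (N : BinNet V) (v : V) : Prop :=
  outdeg N.arc v ≠ 0 ∧ ∀ w, N.arc v w = true → N.IsRetic w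

/-- `T` is a rooted spanning tree of `N` (using a subset of the arcs of `N`,
every non-root vertex having exactly one incoming tree arc). -/
def BinNet.IsSpanningTree (N : BinNet V) (T : V → V → Bool) : Prop :=
  (∀ u v, T u v = true → N.arc u v = true) ∧
  (∀ u, T u N.root = false) ∧
  (∀ v, v ≠ N.root → indeg T v = 1)

/-- `N` is tree-based: it has a rooted spanning tree without dummy leaves,
i.e. every leaf of the spanning tree is a leaf of `N`. -/
def BinNet.TreeBased (N : BinNet V) : Prop :=
  ∃ T, N.IsSpanningTree T ∧ ∀ v, outdeg T v = 0 → outdeg N.arc v = 0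

/-- A vertex `v` is stable if there is a leaf `ℓ` such that every directed path from the
root to `ℓ` passes through `v`. -/
def BinNet.StableVertex {V : Type} [Fintype V] [DecidableEq V] (N : BinNet V) (v : V) : Prop :=
  ∃ ℓ, N.IsLeaf ℓ ∧ ∀ p : List V, p.head? = some N.root → p.getLast? = some ℓ →
    p.Chain' (fun a b => N.arc a b = true) → v ∈ p

/-- The network is stable if every reticulation is stable. -/
def BinNet.Stable {V : Type} [Fintype V] [DecidableEq V] (N : BinNet V) : Prop :=
  ∀ r, N.IsRetic r → N.StableVertex r

/-! A network is tree-based as soon as the omnians can be matched injectively to children of theirs: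
give each matched reticulation its omnian as tree parent; every other non-leaf has a child that is
not a reticulation, whose only parent it is. In a stable network no reticulation has a reticulation
child, so every omnian other than the root has two reticulation children. Double counting the arcs
from a set `S` of omnians into its set `R` of children, all of indegree `2`, gives
`2 * #S - 1 ≤ 2 * #R`, which is Hall's condition for the matching. -/

open Finset Relation

section Degree

variable (arc : V → V → Bool)

lemma indeg_ne_zero_iff {v : V} : indeg arc v ≠ 0 ↔ ∃ u, arc u v = true := by
  simp [indeg]

lemma outdeg_ne_zero_iff {u : V} : outdeg arc u ≠ 0 ↔ ∃ v, arc u v = true := by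
  simp [outdeg]

variable {arc}

lemma eq_of_arc_of_indeg_eq_one {u u' v : V} (hv : indeg arc v = 1)
    (hu : arc u v = true) (hu' : arc u' v = true) : u = u' :=
  card_le_one.mp hv.le u (by simpa using hu) u' (by simpa using hu')

lemma eq_of_arc_of_outdeg_eq_one {u v v' : V} (hu : outdeg arc u = 1)
    (hv : arc u v = true) (hv' : arc u v' = true) : v = v' :=
  card_le_one.mp hu.le v (by simpa using hv) v' (by simpa using hv')

lemma exists_ne_arc_of_indeg_eq_two {u v : V} (hv : indeg arc v = 2) :
    ∃ u', u' ≠ u ∧ arc u' v = true := by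
  obtain ⟨u', hu', hne⟩ :=
    exists_mem_ne (s := univ.filter fun u => arc u v = true) (by unfold indeg at hv; omega) u
  exact ⟨u', hne, (mem_filter.mp hu').2⟩

lemma sum_outdeg_le_sum_indeg {S R : Finset V}
    (hR : ∀ u ∈ S, ∀ v, arc u v = true → v ∈ R) :
    ∑ u ∈ S, outdeg arc u ≤ ∑ v ∈ R, indeg arc v := by
  calc ∑ u ∈ S, outdeg arc u
      = ∑ u ∈ S, #(R.bipartiteAbove (fun u v => arc u v = true) u) := by
        refine sum_congr rfl fun u hu => congrArg card ?_
        ext v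
        simpa [bipartiteAbove] using hR u hu v
    _ = ∑ v ∈ R, #(S.bipartiteBelow (fun u v => arc u v = true) v) :=
        sum_card_bipartiteAbove_eq_sum_card_bipartiteBelow _
    _ ≤ ∑ v ∈ R, indeg arc v :=
        sum_le_sum fun v _ => card_le_card (filter_subset_filter _ (subset_univ S))

end Degree

lemma Relation.ReflTransGen.avoiding_or_through {α : Type*} {R : α → α → Prop} {a b : α} (c : α)
    (h : ReflTransGen R a b) :
    ReflTransGen (fun x y => R x y ∧ y ≠ c) a b ∨ (ReflTransGen R a c ∧ ReflTransGen R c b) := by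
  induction h with
  | refl => exact Or.inl .refl
  | @tail x y _ hxy ih =>
    by_cases hy : y = c
    · subst hy
      refine Or.inr ⟨?_, .refl⟩
      rcases ih with ih | ih
      · exact (ReflTransGen.mono (fun _ _ => And.left) _ _ ih).tail hxy
      · exact (ih.1.trans ih.2).tail hxy
    · exact ih.imp (·.tail ⟨hxy, hy⟩) fun h => ⟨h.1, h.2.tail hxy⟩

lemma List.exists_isChain_of_reflTransGen_avoiding {α : Type*} {R : α → α → Prop} {a b c : α}
    (hac : a ≠ c) (h : ReflTransGen (fun x y => R x y ∧ y ≠ c) a b) :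
    ∃ l : List α, l.head? = some a ∧ l.getLast? = some b ∧ l.IsChain R ∧ c ∉ l := by
  induction h using ReflTransGen.head_induction_on with
  | refl => exact ⟨[b], rfl, rfl, List.isChain_singleton b, by simpa using hac.symm⟩
  | @head a a' haa' _ ih =>
    obtain ⟨l, hhead, hlast, hchain, hc⟩ := ih haa'.2
    obtain ⟨l, rfl⟩ : ∃ l', l = a' :: l' := ⟨l.tail, (List.eq_cons_of_mem_head? hhead)⟩
    refine ⟨a :: a' :: l, rfl, ?_, List.isChain_cons_cons.mpr ⟨haa'.1, hchain⟩, ?_⟩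
    · simpa [List.getLast?_cons_cons] using hlast
    · simpa [hac.symm] using hc

namespace BinNet

variable (N : BinNet V)

lemma wellFounded_arc : WellFounded fun u v : V => N.arc u v = true := by
  have : Std.Irrefl (TransGen fun u v : V => N.arc u v = true) := ⟨N.acyclic⟩
  exact (Finite.wellFounded_of_trans_of_irrefl (TransGen fun u v : V => N.arc u v = true)).mono
    fun _ _ h => .single h

lemma ne_root_of_arc {u v : V} (h : N.arc u v = true) : v ≠ N.root := by
  rintro rfl
  exact (indeg_ne_zero_iff N.arc).mpr ⟨u, h⟩ N.root_indeg

lemma exists_arc_of_ne_root {v : V} (hv : v ≠ N.root) : ∃ u, N.arc u v = true :=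
  (indeg_ne_zero_iff N.arc).mp (by rcases N.vertex_types v hv with h | h | h <;> omega)

lemma reflTransGen_root (v : V) : ReflTransGen (fun a b => N.arc a b = true) N.root v := by
  induction v using N.wellFounded_arc.induction with
  | _ v ih =>
    by_cases hv : v = N.root
    · exact hv ▸ .refl
    · obtain ⟨u, hu⟩ := N.exists_arc_of_ne_root hv
      exact (ih u hu).tail hu

lemma indeg_eq_one_of_not_isRetic {v : V} (hv : v ≠ N.root) (hr : ¬ N.IsRetic v) :
    indeg N.arc v = 1 := by
  unfold IsRetic at hr
  rcases N.vertex_types v hv with h | h | h <;> omega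

variable {N}

lemma IsRetic.ne_root {r : V} (hr : N.IsRetic r) : r ≠ N.root := by
  rintro rfl
  exact absurd N.root_indeg (by unfold IsRetic at hr; omega)

lemma IsRetic.outdeg_eq_one {r : V} (hr : N.IsRetic r) : outdeg N.arc r = 1 := by
  have hne := hr.ne_root
  unfold IsRetic at hr
  rcases N.vertex_types r hne with h | h | h <;> omega

lemma StableVertex.exists_leaf_not_reflTransGen_avoiding {r : V} (hr : r ≠ N.root)
    (hs : N.StableVertex r) :
    ∃ ℓ, N.IsLeaf ℓ ∧ ¬ ReflTransGen (fun a b => N.arc a b = true ∧ b ≠ r) N.root ℓ := by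
  obtain ⟨ℓ, hℓ, hpaths⟩ := hs
  refine ⟨ℓ, hℓ, fun h => ?_⟩
  obtain ⟨p, hhead, hlast, hchain, hrp⟩ := List.exists_isChain_of_reflTransGen_avoiding hr.symm h
  exact hrp (hpaths p hhead hlast hchain)

/-- Otherwise the second parent of the child would give a root-to-leaf path avoiding the upper
reticulation, for every leaf below it. -/
lemma Stable.not_isRetic_of_arc (hN : N.Stable) {r c : V} (hr : N.IsRetic r)
    (hrc : N.arc r c = true) : ¬ N.IsRetic c := by
  intro hc
  set A := fun a b : V => N.arc a b = true
  obtain ⟨ℓ, hℓ, hno⟩ := (hN r hr).exists_leaf_not_reflTransGen_avoiding hr.ne_root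
  have below_r {x : V} (hx : ReflTransGen A r x) (hxr : x ≠ r) : ReflTransGen A c x := by
    obtain ⟨c', hrc', hc'x⟩ := hx.cases_head.resolve_left hxr.symm
    rwa [eq_of_arc_of_outdeg_eq_one hr.outdeg_eq_one hrc hrc']
  have hrℓ : ReflTransGen A r ℓ :=
    ((N.reflTransGen_root ℓ).avoiding_or_through r |>.resolve_left hno).2
  have hℓr : ℓ ≠ r := by
    rintro rfl
    exact absurd hℓ (by unfold IsLeaf; rw [hr.outdeg_eq_one]; omega)
  have hcℓ : ReflTransGen (fun a b => A a b ∧ b ≠ r) c ℓ :=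
    (below_r hrℓ hℓr).avoiding_or_through r |>.resolve_right
      fun h => N.acyclic r (TransGen.head' hrc h.1)
  obtain ⟨p, hpr, hpc⟩ := exists_ne_arc_of_indeg_eq_two (u := r) hc
  rcases (N.reflTransGen_root p).avoiding_or_through r with hp | ⟨_, hrp⟩
  · have hcr : c ≠ r := fun h => N.acyclic r (.single (h ▸ hrc))
    exact hno ((hp.tail ⟨hpc, hcr⟩).trans hcℓ)
  · exact N.acyclic c (TransGen.tail' (below_r hrp hpr) hpc)

lemma IsOmnian.outdeg_eq_two (hN : N.Stable) {u : V} (hu : N.IsOmnian u) (hne : u ≠ N.root) :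
    outdeg N.arc u = 2 := by
  rcases N.vertex_types u hne with ⟨-, h⟩ | ⟨h, -⟩ | ⟨-, h⟩
  · exact absurd h hu.1
  · obtain ⟨c, hc⟩ := (outdeg_ne_zero_iff N.arc).mp hu.1
    exact absurd (hu.2 c hc) (hN.not_isRetic_of_arc h hc)
  · exact h

lemma IsOmnian.two_mul_card_le_sum_outdeg (hN : N.Stable) {S : Finset V}
    (hS : ∀ u ∈ S, N.IsOmnian u) : 2 * #S ≤ ∑ u ∈ S, outdeg N.arc u + 1 := by
  have hrest : ∑ u ∈ S.erase N.root, outdeg N.arc u = 2 * #(S.erase N.root) := by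
    rw [card_eq_sum_ones, mul_sum]
    exact sum_congr rfl fun u hu =>
      (hS u (mem_of_mem_erase hu)).outdeg_eq_two hN (ne_of_mem_erase hu)
  by_cases h : N.root ∈ S
  · rw [← add_sum_erase S _ h, ← card_erase_add_one h, hrest]
    have := (hS _ h).1
    omega
  · rw [erase_eq_of_notMem h] at hrest
    omega

lemma Stable.exists_injective_omnian_child (hN : N.Stable) :
    ∃ f : {u // N.IsOmnian u} → V, Function.Injective f ∧ ∀ u, N.arc u.1 (f u) = true := by
  let children (u : {u // N.IsOmnian u}) : Finset V := univ.filter fun v => N.arc u v = true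
  suffices hall : ∀ s, #s ≤ #(s.biUnion children) by
    obtain ⟨f, hf, hchild⟩ := (all_card_le_biUnion_card_iff_exists_injective children).mp hall
    exact ⟨f, hf, fun u => (mem_filter.mp (hchild u)).2⟩
  intro s
  set R := s.biUnion children
  have hR : ∀ u ∈ s.map (.subtype _), ∀ v, N.arc u v = true → v ∈ R := by
    simp only [mem_map, Function.Embedding.subtype_apply]
    rintro _ ⟨u, hu, rfl⟩ v huv
    exact mem_biUnion.mpr ⟨u, hu, by simpa [children] using huv⟩
  have hindeg : ∑ v ∈ R, indeg N.arc v = 2 * #R := by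
    rw [card_eq_sum_ones, mul_sum]
    refine sum_congr rfl fun v hv => ?_
    obtain ⟨u, _, huv⟩ := mem_biUnion.mp hv
    exact u.2.2 v (by simpa [children] using huv)
  have lower := IsOmnian.two_mul_card_le_sum_outdeg hN (S := s.map (.subtype _)) <| by
    simp only [mem_map]
    rintro _ ⟨u, -, rfl⟩
    exact u.2
  have upper := sum_outdeg_le_sum_indeg hR
  rw [card_map] at lower
  omega

lemma treeBased_of_parent (pa : V → V) (hpa : ∀ v, v ≠ N.root → N.arc (pa v) v = true)
    (hsurj : ∀ u, outdeg N.arc u ≠ 0 → ∃ v, v ≠ N.root ∧ pa v = u) : N.TreeBased := by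
  refine ⟨fun u v => decide (v ≠ N.root ∧ pa v = u), ⟨?_, ?_, ?_⟩, ?_⟩
  · intro u v h
    simp only [decide_eq_true_eq] at h
    exact h.2 ▸ hpa v h.1
  · simp
  · intro v hv
    unfold indeg
    rw [card_eq_one]
    exact ⟨pa v, by ext u; simp [hv, eq_comm]⟩
  · intro u hu
    by_contra hne
    obtain ⟨v, hv, rfl⟩ := hsurj u hne
    exact (outdeg_ne_zero_iff _).mpr ⟨v, by simp [hv]⟩ hu

lemma treeBased_of_injective_omnian_child (f : {u // N.IsOmnian u} → V)
    (hf : Function.Injective f) (hfarc : ∀ u, N.arc u.1 (f u) = true) : N.TreeBased := by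
  have : ∀ v, ∃ u, v ≠ N.root → N.arc u v = true := fun v =>
    if hv : v = N.root then ⟨v, absurd hv⟩ else (N.exists_arc_of_ne_root hv).imp fun _ h _ => h
  choose par hpar using this
  have hpa : ∀ v, v ≠ N.root → N.arc (Function.extend f Subtype.val par v) v = true := by
    intro v hv
    by_cases h : ∃ u, f u = v
    · obtain ⟨u, rfl⟩ := h
      rw [hf.extend_apply]
      exact hfarc u
    · rw [Function.extend_apply' _ _ _ h]
      exact hpar v hv
  refine N.treeBased_of_parent _ hpa fun u hu => ?_
  by_cases ho : N.IsOmnian u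
  · exact ⟨f ⟨u, ho⟩, N.ne_root_of_arc (hfarc _), hf.extend_apply _ _ _⟩
  · obtain ⟨v, huv, hv⟩ : ∃ v, N.arc u v = true ∧ ¬ N.IsRetic v := by
      simpa [IsOmnian, hu] using ho
    have hvr := N.ne_root_of_arc huv
    exact ⟨v, hvr,
      eq_of_arc_of_indeg_eq_one (N.indeg_eq_one_of_not_isRetic hvr hv) (hpa v hvr) huv⟩

end BinNet

/-- Every stable binary phylogenetic network is tree-based. -/
theorem stmt_11 {V : Type} [Fintype V] [DecidableEq V] (N : BinNet V)
    (hstable : N.Stable) :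
    N.TreeBased := by
  obtain ⟨f, hf, hfarc⟩ := hstable.exists_injective_omnian_child
  exact N.treeBased_of_injective_omnian_child f hf hfarc
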